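/- arXiv:2412.03119 — 6 statements merged into one kernel-verified Lean document; each statement's English description precedes it below -/
import Mathlib

section
/- For all real x with |x| < 1 and integer n ≥ 0, the series ∑_{j=0}^∞ (j+1)_{n,λ} x^j converges, and (1-x)^{n+1} · ∑_{j=0}^∞ (j+1)_{n,λ} x^j is a polynomial in x of degree at most n (this polynomial is the degenerate Eulerian polynomial A_{n,λ}(x)). -/
open Finset PowerSeries

/-- Degenerate falling factorial `(x)_{n,λ} = x(x-λ)⋯(x-(n-1)λ)`. -/
noncomputable def dfall (l x : ℝ) (n : ℕ) : ℝ := ∏ i ∈ Finset.range n, (x - i * l)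

/-- Degenerate Eulerian number `A_λ(n,k) = ∑_{i=0}^k C(n+1,i)(-1)^i (k-i+1)_{n,λ}`. -/
noncomputable def degEulerianNum (l : ℝ) (n k : ℕ) : ℝ :=
  ∑ i ∈ Finset.range (k+1), ((n+1).choose i : ℝ) * (-1)^i * dfall l ((k : ℝ) - i + 1) n

/-- Degenerate Eulerian polynomial `A_{n,λ}(x) = ∑_{k=0}^n A_λ(n,k) x^k`. -/
noncomputable def degEulerianPoly (l : ℝ) (n : ℕ) (x : ℝ) : ℝ :=
  ∑ k ∈ Finset.range (n+1), degEulerianNum l n k * x^k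

/-- Generalized binomial coefficient `binom(y,m) = y(y-1)⋯(y-m+1)/m!`. -/
noncomputable def genBinom (y : ℝ) (m : ℕ) : ℝ :=
  (∏ i ∈ Finset.range m, (y - i)) / m.factorial

/-- Degenerate exponential `e_λ^x(t) = ∑_k (x)_{k,λ} t^k/k!` as a formal power series. -/
noncomputable def degExp (l x : ℝ) : PowerSeries ℝ :=
  PowerSeries.mk fun k => dfall l x k / k.factorial

/-- Degenerate Stirling number of the second kind (explicit formula). -/
noncomputable def degStirling2 (l : ℝ) (n k : ℕ) : ℝ :=
  (-1)^k / k.factorial * ∑ j ∈ Finset.range (k+1), (-1)^j * (k.choose j : ℝ) * dfall l j n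

/-!
Write `S_f(x) = ∑ f(j) xʲ`. Splitting off the term `j = 0` gives
`(1 - x) S_f(x) = f(0) + x S_{Δf}(x)` with `Δ` the forward difference. Iterating this `m` times,
`(1 - x)ᵐ S_f(x) = ∑_{k<m} Δᵏf(0) xᵏ (1 - x)^(m-1-k)` as soon as `Δᵐ f = 0`, which holds for
`f = P.eval` whenever `deg P < m`. The sequence `j ↦ (j + 1)_{n,λ}` is a polynomial of degree `n`
in `j`, so `m = n + 1` gives the theorem.
-/

open Polynomial fwdDiff

theorem one_sub_mul_tsum_mul_pow {R : Type*} [CommRing R] [TopologicalSpace R]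
    [IsTopologicalRing R] [T2Space R] {f : ℕ → R} {x : R} (hf : Summable fun j ↦ f j * x ^ j)
    (hf_succ : Summable fun j ↦ f (j + 1) * x ^ j) :
    (1 - x) * ∑' j, f j * x ^ j = f 0 + x * ∑' j, (f (j + 1) - f j) * x ^ j := by
  have h_split : ∑' j, f j * x ^ j = f 0 + x * ∑' j, f (j + 1) * x ^ j := by
    rw [hf.tsum_eq_zero_add, ← hf_succ.tsum_mul_left]
    simp only [pow_zero, mul_one, pow_succ]
    congr 1
    exact tsum_congr fun j ↦ by ring
  simp only [sub_mul]
  rw [hf_succ.tsum_sub hf]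
  linear_combination h_split

section GeneratingFunction

variable {R : Type*} [NormedCommRing R]

theorem summable_eval_mul_pow [HasSummableGeomSeries R] (P : R[X]) {x : R} (hx : ‖x‖ < 1) :
    Summable fun j : ℕ ↦ P.eval (j : R) * x ^ j := by
  simp_rw [eval_eq_sum_range, sum_mul]
  exact summable_sum fun i _ ↦
    ((summable_pow_mul_geometric_of_norm_lt_one i hx).mul_left (P.coeff i)).congr
      fun j ↦ by ring

theorem fwdDiff_eval (P : R[X]) : Δ_[1] P.eval = (taylor 1 P - P).eval := by
  ext y
  simp [fwdDiff, taylor_eval]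

theorem one_sub_pow_mul_tsum_eval_mul_pow [HasSummableGeomSeries R] {P : R[X]} {m : ℕ}
    (hP : Δ_[1] ^[m] P.eval = 0) {x : R} (hx : ‖x‖ < 1) :
    (1 - x) ^ m * ∑' j : ℕ, P.eval (j : R) * x ^ j =
      ∑ k ∈ range m, Δ_[1] ^[k] P.eval 0 * x ^ k * (1 - x) ^ (m - 1 - k) := by
  induction m generalizing P with
  | zero => simp [show ∀ y, P.eval y = 0 from congr_fun hP]
  | succ m ih =>
    have hΔ : Δ_[1] ^[m] (taylor 1 P - P).eval = 0 := by
      rwa [← fwdDiff_eval, ← Function.iterate_succ_apply]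
    have h_step := one_sub_mul_tsum_mul_pow (summable_eval_mul_pow P hx)
      (by simpa [taylor_eval] using summable_eval_mul_pow (taylor 1 P) hx)
    have h_diff : ∀ j : ℕ, P.eval ((j + 1 : ℕ) : R) - P.eval (j : R) =
        (taylor 1 P - P).eval (j : R) := fun j ↦ by simp [taylor_eval]
    simp only [h_diff] at h_step
    rw [pow_succ, mul_assoc, h_step, mul_add, mul_left_comm, ih hΔ, sum_range_succ', mul_sum,
      ← fwdDiff_eval]
    simp only [Function.iterate_succ_apply, Nat.cast_zero, Nat.add_sub_cancel, Nat.sub_sub,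
      add_comm 1]
    rw [add_comm]
    congr 1
    · exact sum_congr rfl fun k _ ↦ by ring
    · simp [mul_comm]

end GeneratingFunction

theorem natDegree_sum_C_mul_X_pow_mul_one_sub_X_pow_le {R : Type*} [CommRing R] (a : ℕ → R)
    (n : ℕ) :
    (∑ k ∈ range (n + 1),
      Polynomial.C (a k) * Polynomial.X ^ k * (1 - Polynomial.X) ^ (n - k)).natDegree ≤ n := by
  have h_one_sub_X : (1 - Polynomial.X : R[X]).natDegree ≤ 1 :=
    (natDegree_sub_le _ _).trans (max_le (by simp) natDegree_X_le)
  refine natDegree_sum_le_of_forall_le _ _ fun k hk ↦ natDegree_mul_le.trans ?_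
  have hkn : k ≤ n := Nat.lt_succ_iff.mp (mem_range.mp hk)
  calc (Polynomial.C (a k) * Polynomial.X ^ k).natDegree +
        ((1 - Polynomial.X : R[X]) ^ (n - k)).natDegree
      ≤ k + (n - k) * 1 :=
        add_le_add (natDegree_C_mul_X_pow_le _ _) (natDegree_pow_le_of_le _ h_one_sub_X)
    _ = n := by omega

noncomputable def dfallPoly (l : ℝ) (n : ℕ) : ℝ[X] :=
  ∏ i ∈ range n, (Polynomial.X - Polynomial.C (i * l))

theorem eval_dfallPoly (l x : ℝ) (n : ℕ) : (dfallPoly l n).eval x = dfall l x n := by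
  simp [dfallPoly, dfall, eval_prod]

theorem natDegree_dfallPoly (l : ℝ) (n : ℕ) : (dfallPoly l n).natDegree = n := by
  rw [dfallPoly, natDegree_prod_of_monic _ _ fun i _ ↦ monic_X_sub_C _]
  simp only [natDegree_X_sub_C, sum_const, card_range, smul_eq_mul, mul_one]

/-- for `|x|<1`, the series `∑_j (j+1)_{n,λ} x^j` converges and
`(1-x)^{n+1}` times its sum is (the value at `x` of) a polynomial of degree at most `n`. -/
theorem stmt0 (l : ℝ) (n : ℕ) :
    ∃ p : Polynomial ℝ, p.natDegree ≤ n ∧ ∀ x : ℝ, |x| < 1 →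
      Summable (fun j : ℕ => dfall l ((j : ℝ) + 1) n * x ^ j) ∧
      (1 - x) ^ (n + 1) * (∑' j : ℕ, dfall l ((j : ℝ) + 1) n * x ^ j) = p.eval x := by
  set P := taylor 1 (dfallPoly l n)
  have h_eval : ∀ j : ℕ, P.eval (j : ℝ) = dfall l ((j : ℝ) + 1) n := fun j ↦ by
    rw [taylor_eval, eval_dfallPoly]
  have h_deg : P.natDegree < n + 1 := by
    rw [natDegree_taylor, natDegree_dfallPoly]
    exact n.lt_succ_self
  refine ⟨∑ k ∈ range (n + 1),
      Polynomial.C (Δ_[1] ^[k] P.eval 0) * Polynomial.X ^ k * (1 - Polynomial.X) ^ (n - k),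
    natDegree_sum_C_mul_X_pow_mul_one_sub_X_pow_le _ n, fun x hx ↦ ⟨?_, ?_⟩⟩
  · simpa only [h_eval] using summable_eval_mul_pow P (x := x) (by rwa [Real.norm_eq_abs])
  · simp_rw [← h_eval]
    rw [one_sub_pow_mul_tsum_eval_mul_pow (fwdDiff_iter_eq_zero_of_degree_lt h_deg)
      (by rwa [Real.norm_eq_abs])]
    simp [eval_finsetSum]
end

section
/- For integers n ≥ 0 and 0 ≤ k ≤ n, the degenerate Eulerian number satisfies A_λ(n,k) = ∑_{i=0}^{k} binom(n+1, i) (-1)^i (k-i+1)_{n,λ}. -/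
/-! Expanding `(1 - x) ^ (n + 1)` binomially, the product `(1 - x) ^ (n + 1) * ∑ⱼ (j + 1)_{n,λ} xʲ`
is a Cauchy product whose `k`-th coefficient is `∑ᵢ C(n + 1, i) (-1)ⁱ (k - i + 1)_{n,λ}`; both
factors converge absolutely on `(-1, 1)` because `(x)_{n,λ}` grows polynomially in `x`. The
hypothesis says this power series agrees with the polynomial `∑ₖ A k xᵏ` on `(-1, 1)`, so by the
uniqueness of power series expansions the coefficients agree. -/

open Finset PowerSeries

open FormalMultilinearSeries NNReal

lemma summable_natCast_add_pow_mul_geometric {R : Type*} [NormedCommRing R]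
    [HasSummableGeomSeries R] (c : R) (N : ℕ) {r : R} (hr : ‖r‖ < 1) :
    Summable fun m : ℕ => ((m : R) + c) ^ N * r ^ m := by
  simp_rw [add_pow, sum_mul]
  exact summable_sum fun j _ =>
    ((summable_pow_mul_geometric_of_norm_lt_one j hr).mul_right (c ^ (N - j) * N.choose j)).congr
      fun m => by ring

lemma abs_dfall_le (l x : ℝ) (n : ℕ) : |dfall l x n| ≤ (|x| + n * |l|) ^ n := by
  rw [dfall, abs_prod]
  calc ∏ i ∈ range n, |x - i * l| ≤ ∏ _i ∈ range n, (|x| + n * |l|) := by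
        refine prod_le_prod (fun _ _ => abs_nonneg _) fun i hi => ?_
        calc |x - i * l| ≤ |x| + i * |l| := by simpa [abs_mul] using abs_sub x (i * l)
          _ ≤ |x| + n * |l| := by gcongr; exact_mod_cast (mem_range.mp hi).le
    _ = (|x| + n * |l|) ^ n := by rw [prod_const, card_range]

lemma summable_norm_dfall_natCast_add_mul_pow (l a : ℝ) (n : ℕ) {x : ℝ} (hx : |x| < 1) :
    Summable fun j : ℕ => ‖dfall l (j + a) n * x ^ j‖ := by
  refine (summable_natCast_add_pow_mul_geometric (|a| + n * |l|) n (r := |x|)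
    (by rwa [Real.norm_eq_abs, abs_abs])).of_nonneg_of_le (fun _ => norm_nonneg _) fun j => ?_
  rw [norm_mul, norm_pow, Real.norm_eq_abs, Real.norm_eq_abs]
  gcongr
  refine (abs_dfall_le l _ n).trans (pow_le_pow_left₀ (by positivity) ?_ n)
  have htri := abs_add_le (j : ℝ) a
  rw [Nat.abs_cast] at htri
  linarith

lemma hasSum_choose_mul_neg_one_pow_mul_pow {R : Type*} [CommRing R] [TopologicalSpace R]
    (N : ℕ) (x : R) :
    HasSum (fun i => (N.choose i : R) * (-1) ^ i * x ^ i) ((1 - x) ^ N) := by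
  have hsupp : ∀ i ∉ range (N + 1), (N.choose i : R) * (-1) ^ i * x ^ i = 0 := fun i hi => by
    rw [Nat.choose_eq_zero_of_lt (by simpa using hi)]; simp
  have hexpand : (1 - x) ^ N = ∑ i ∈ range (N + 1), (N.choose i : R) * (-1) ^ i * x ^ i := by
    rw [sub_eq_neg_add, add_pow]
    exact sum_congr rfl fun i _ => by rw [neg_pow]; ring
  rw [hexpand]
  exact hasSum_sum_of_ne_finset_zero hsupp

lemma hasSum_one_sub_pow_mul {R : Type*} [NormedCommRing R] [CompleteSpace R]
    {f : ℕ → R} {x : R} (hf : Summable fun j => ‖f j * x ^ j‖) (N : ℕ) :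
    HasSum (fun m => (∑ i ∈ range (m + 1), (N.choose i : R) * (-1) ^ i * f (m - i)) * x ^ m)
      ((1 - x) ^ N * ∑' j, f j * x ^ j) := by
  have hN := hasSum_choose_mul_neg_one_pow_mul_pow N x
  have hN_norm : Summable fun i => ‖(N.choose i : R) * (-1) ^ i * x ^ i‖ := by
    refine summable_of_ne_finset_zero (s := range (N + 1)) fun i hi => ?_
    rw [Nat.choose_eq_zero_of_lt (by simpa using hi)]; simp
  rw [← hN.tsum_eq]
  convert hasSum_sum_range_mul_of_summable_norm hN_norm hf using 2 with m
  rw [sum_mul]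
  refine sum_congr rfl fun i hi => ?_
  rw [← pow_mul_pow_sub x (Nat.le_of_lt_succ (mem_range.mp hi))]
  ring

lemma hasFPowerSeriesOnBall_ofScalars_of_hasSum {b : ℕ → ℝ} {F : ℝ → ℝ} {ρ : ℝ≥0} (hρ : 0 < ρ)
    (hF : ∀ x : ℝ, |x| < ρ → HasSum (fun m => b m * x ^ m) (F x)) :
    HasFPowerSeriesOnBall F (ofScalars ℝ b) 0 ρ where
  r_le := by
    refine ENNReal.le_of_forall_nnreal_lt fun r hr =>
      (ofScalars ℝ b).le_radius_of_tendsto (l := 0) ?_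
    have hr' : |(r : ℝ)| < ρ := by rw [abs_of_nonneg r.coe_nonneg]; exact_mod_cast hr
    simpa [ofScalars_norm, abs_mul] using (hF r hr').summable.tendsto_atTop_zero.norm
  r_pos := by exact_mod_cast hρ
  hasSum {y} hy := by
    rw [Metric.mem_eball, edist_zero_right, enorm_lt_coe, ← NNReal.coe_lt_coe,
      coe_nnnorm, Real.norm_eq_abs] at hy
    simpa [ofScalars_apply_eq, mul_comm] using hF y hy

lemma eq_of_hasSum_mul_pow {b b' : ℕ → ℝ} {F : ℝ → ℝ} {ρ : ℝ≥0} (hρ : 0 < ρ)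
    (hb : ∀ x : ℝ, |x| < ρ → HasSum (fun m => b m * x ^ m) (F x))
    (hb' : ∀ x : ℝ, |x| < ρ → HasSum (fun m => b' m * x ^ m) (F x)) : b = b' :=
  (ofScalars_series_eq_iff ℝ b b').mp <|
    (hasFPowerSeriesOnBall_ofScalars_of_hasSum hρ hb).hasFPowerSeriesAt.eq_formalMultilinearSeries
      (hasFPowerSeriesOnBall_ofScalars_of_hasSum hρ hb').hasFPowerSeriesAt

lemma hasSum_ite_mul_pow {A : ℕ → ℝ} (n : ℕ) (x : ℝ) :
    HasSum (fun m => (if m ≤ n then A m else 0) * x ^ m) (∑ k ∈ range (n + 1), A k * x ^ k) := by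
  have hsupp : ∀ m ∉ range (n + 1), (if m ≤ n then A m else 0) * x ^ m = 0 := fun m hm => by
    rw [if_neg (by simpa [Nat.lt_succ_iff] using hm), zero_mul]
  have h : HasSum _ _ := hasSum_sum_of_ne_finset_zero hsupp
  rwa [sum_congr rfl fun m hm => by rw [if_pos (Nat.lt_succ_iff.mp (mem_range.mp hm))]] at h

/-- if `A k` (for `k ≤ n`) are the coefficients of the degenerate Eulerian
polynomial, i.e. `∑_j (j+1)_{n,λ} x^j = (∑_{k=0}^n A k x^k)/(1-x)^{n+1}` for `|x|<1`,
then `A k = ∑_{i=0}^k C(n+1,i)(-1)^i (k-i+1)_{n,λ}` for `0 ≤ k ≤ n`. -/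
theorem stmt2 (l : ℝ) (n : ℕ) (A : ℕ → ℝ)
    (hA : ∀ x : ℝ, |x| < 1 →
      (1 - x) ^ (n + 1) * (∑' j : ℕ, dfall l ((j : ℝ) + 1) n * x ^ j) =
        ∑ k ∈ Finset.range (n + 1), A k * x ^ k) :
    ∀ k ≤ n, A k =
      ∑ i ∈ Finset.range (k + 1), ((n+1).choose i : ℝ) * (-1)^i * dfall l ((k : ℝ) - i + 1) n := by
  intro k hk
  have hcoeff := congrFun (eq_of_hasSum_mul_pow one_pos
    (fun x (hx : |x| < 1) => hA x hx ▸
      hasSum_one_sub_pow_mul (summable_norm_dfall_natCast_add_mul_pow l 1 n hx) (n + 1))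
    (fun x _ => hasSum_ite_mul_pow (A := A) n x)) k
  rw [if_pos hk] at hcoeff
  rw [← hcoeff]
  refine sum_congr rfl fun i hi => ?_
  rw [Nat.cast_sub (Nat.le_of_lt_succ (mem_range.mp hi))]
end

section
/- The degenerate Eulerian polynomials satisfy the recurrence A_{0,λ}(x) = 1 and, for n ≥ 1, A_{n,λ}(x) = ∑_{i=0}^{n-1} binom(n, i) A_{i,λ}(x) (1)_{n-i,-λ} (x-1)^{n-i-1}. -/
open Finset PowerSeries

/-! With `F_n(x) = ∑_j (j+1)_{n,λ} x^j`, the Cauchy product shows that the `m`-th coefficient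
of `(1-x)^{n+1} F_n` is `A_λ(n,m)` for every `m`. The Vandermonde identity for `(x)_{n,λ}` at
`t+1` and `-1` gives `(x-1) F_n = ∑_{i<n} C(n,i) (-1)_{n-i,λ} F_i`, hence
`(1-x)^{n+1} F_n = ∑_{i<n} C(n,i) (1)_{n-i,-λ} (x-1)^{n-i-1} (1-x)^{i+1} F_i`.
By strong induction the right-hand side is a polynomial of degree `< n`, so `A_λ(n,m) = 0` for
`m > n` and `(1-x)^{n+1} F_n` is the polynomial `A_{n,λ}`; the recurrence then holds between
polynomials and can be evaluated at `x`. -/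

lemma dfall_zero (l x : ℝ) : dfall l x 0 = 1 := prod_range_zero _

lemma dfall_succ (l x : ℝ) (n : ℕ) : dfall l x (n + 1) = dfall l x n * (x - n * l) :=
  prod_range_succ _ _

lemma dfall_zero_of_ne_zero (l : ℝ) {n : ℕ} (hn : n ≠ 0) : dfall l 0 n = 0 :=
  prod_eq_zero (mem_range.2 (Nat.pos_of_ne_zero hn)) (by simp)

lemma dfall_neg_one (l : ℝ) (n : ℕ) : dfall l (-1) n = (-1) ^ n * dfall (-l) 1 n :=
  calc dfall l (-1) n = ∏ i ∈ range n, (-1) * (1 - i * -l) := prod_congr rfl fun i _ ↦ by ring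
    _ = (-1) ^ n * dfall (-l) 1 n := by rw [prod_mul_distrib, prod_const, card_range, dfall]

theorem dfall_add (l x y : ℝ) (n : ℕ) :
    dfall l (x + y) n =
      ∑ ij ∈ antidiagonal n, (n.choose ij.1 : ℝ) * (dfall l x ij.1 * dfall l y ij.2) := by
  induction n with
  | zero => simp [dfall_zero]
  | succ n ih =>
    rw [dfall_succ, sum_antidiagonal_choose_succ_mul (fun i j ↦ dfall l x i * dfall l y j),
      ← sum_add_distrib, ih, sum_mul]
    refine sum_congr rfl fun ij hij ↦ ?_
    have hn : (n : ℝ) = ij.1 + ij.2 := by exact_mod_cast (mem_antidiagonal.1 hij).symm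
    rw [Nat.choose_symm_of_eq_add (mem_antidiagonal.1 hij).symm, dfall_succ, dfall_succ, hn]
    ring

lemma dfall_sub_dfall_add_one (l t : ℝ) (n : ℕ) :
    dfall l t n - dfall l (t + 1) n =
      ∑ i ∈ range n, (n.choose i : ℝ) * dfall l (t + 1) i * dfall l (-1) (n - i) := by
  have h := dfall_add l (t + 1) (-1) n
  rw [add_neg_cancel_right, Nat.sum_antidiagonal_eq_sum_range_succ_mk, sum_range_succ] at h
  simp only [Nat.choose_self, Nat.sub_self, dfall_zero] at h
  rw [h]
  simp only [mul_assoc]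
  ring

lemma PowerSeries.coeff_one_sub_X_pow {R : Type*} [CommRing R] (k i : ℕ) :
    coeff i ((1 - X : R⟦X⟧) ^ k) = (-1) ^ i * k.choose i := by
  have h : (1 - X : R⟦X⟧) = rescale (-1) (1 + X) := by simp [sub_eq_add_neg]
  rw [h, ← map_pow, coeff_rescale,
    show (1 + X : R⟦X⟧) ^ k = ((1 + Polynomial.X) ^ k : Polynomial R) by simp,
    Polynomial.coeff_coe, Polynomial.coeff_one_add_X_pow]

@[norm_cast]
lemma Polynomial.coe_finsetSum {R ι : Type*} [CommSemiring R] (s : Finset ι)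
    (f : ι → Polynomial R) :
    ((∑ i ∈ s, f i : Polynomial R) : R⟦X⟧) = ∑ i ∈ s, (f i : R⟦X⟧) :=
  map_sum Polynomial.coeToPowerSeries.ringHom f s

noncomputable def dfallSeries (l : ℝ) (n : ℕ) : ℝ⟦X⟧ := mk fun j ↦ dfall l (j + 1) n

lemma coeff_one_sub_X_pow_mul_dfallSeries (l : ℝ) (n m : ℕ) :
    coeff m ((1 - X) ^ (n + 1) * dfallSeries l n) = degEulerianNum l n m := by
  rw [coeff_mul, Nat.sum_antidiagonal_eq_sum_range_succ_mk, degEulerianNum]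
  refine sum_congr rfl fun i hi ↦ ?_
  rw [coeff_one_sub_X_pow, dfallSeries, coeff_mk,
    Nat.cast_sub (by simpa [Nat.lt_succ_iff] using hi)]
  ring

lemma X_mul_dfallSeries (l : ℝ) {n : ℕ} (hn : n ≠ 0) :
    X * dfallSeries l n = PowerSeries.mk fun j ↦ dfall l j n := by
  rw [eq_X_mul_shift_add_const (PowerSeries.mk fun j : ℕ ↦ dfall l j n)]
  simp [dfallSeries, dfall_zero_of_ne_zero l hn]

lemma X_sub_one_mul_dfallSeries (l : ℝ) {n : ℕ} (hn : n ≠ 0) :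
    (X - 1) * dfallSeries l n =
      ∑ i ∈ range n, C ((n.choose i : ℝ) * dfall l (-1) (n - i)) * dfallSeries l i := by
  ext j
  rw [sub_mul, one_mul, X_mul_dfallSeries l hn]
  simp only [dfallSeries, map_sub, map_sum, coeff_C_mul, coeff_mk]
  rw [dfall_sub_dfall_add_one]
  exact sum_congr rfl fun i _ ↦ by ring

lemma one_sub_X_pow_mul_dfallSeries (l : ℝ) {n : ℕ} (hn : n ≠ 0) :
    (1 - X) ^ (n + 1) * dfallSeries l n =
      ∑ i ∈ range n, C ((n.choose i : ℝ) * dfall (-l) 1 (n - i)) * (X - 1) ^ (n - i - 1) *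
        ((1 - X) ^ (i + 1) * dfallSeries l i) := by
  rw [show (1 - X : ℝ⟦X⟧) ^ (n + 1) = -(1 - X) ^ n * (X - 1) by ring, mul_assoc,
    X_sub_one_mul_dfallSeries l hn, mul_sum]
  refine sum_congr rfl fun i hi ↦ ?_
  obtain ⟨m, rfl⟩ := Nat.exists_eq_add_of_lt (mem_range.1 hi)
  rw [show i + m + 1 - i = m + 1 by omega, Nat.add_sub_cancel, dfall_neg_one,
    show i + m + 1 = m + (i + 1) by ring, pow_add, ← neg_sub 1 X, neg_pow (1 - X)]
  simp only [map_mul, map_pow, map_neg, map_one, map_natCast]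
  ring

noncomputable def degEulerianPolynomial (l : ℝ) (n : ℕ) : Polynomial ℝ :=
  ∑ k ∈ range (n + 1), Polynomial.C (degEulerianNum l n k) * Polynomial.X ^ k

lemma eval_degEulerianPolynomial (l : ℝ) (n : ℕ) (x : ℝ) :
    (degEulerianPolynomial l n).eval x = degEulerianPoly l n x := by
  simp [degEulerianPolynomial, degEulerianPoly, Polynomial.eval_finsetSum]

lemma coeff_degEulerianPolynomial (l : ℝ) (n m : ℕ) :
    (degEulerianPolynomial l n).coeff m = if m ≤ n then degEulerianNum l n m else 0 := by
  simp [degEulerianPolynomial, Polynomial.finsetSum_coeff]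

lemma natDegree_degEulerianPolynomial_le (l : ℝ) (n : ℕ) :
    (degEulerianPolynomial l n).natDegree ≤ n :=
  Polynomial.natDegree_le_iff_coeff_eq_zero.2 fun m hm ↦ by
    rw [coeff_degEulerianPolynomial, if_neg (by exact_mod_cast hm.not_ge)]

lemma coe_degEulerianPolynomial (l : ℝ) (n : ℕ) :
    (degEulerianPolynomial l n : ℝ⟦X⟧) = (1 - X) ^ (n + 1) * dfallSeries l n := by
  induction n using Nat.strong_induction_on with | _ n ih => ?_
  rcases eq_or_ne n 0 with rfl | hn
  · have hF : dfallSeries l 0 = PowerSeries.mk 1 := by ext; simp [dfallSeries, dfall_zero]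
    simp [degEulerianPolynomial, degEulerianNum, dfall_zero, hF, mul_comm _ (PowerSeries.mk 1),
      mk_one_mul_one_sub_eq_one]
  set Q := ∑ i ∈ range n, Polynomial.C ((n.choose i : ℝ) * dfall (-l) 1 (n - i)) *
    (Polynomial.X - 1) ^ (n - i - 1) * degEulerianPolynomial l i
  have hQ : (Q : ℝ⟦X⟧) = (1 - X) ^ (n + 1) * dfallSeries l n := by
    rw [one_sub_X_pow_mul_dfallSeries l hn]
    push_cast [Q]
    exact sum_congr rfl fun i hi ↦ by rw [ih i (mem_range.1 hi)]
  have hQ_natDegree : Q.natDegree ≤ n := by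
    refine Polynomial.natDegree_sum_le_of_forall_le _ _ fun i hi ↦ ?_
    have hX : (Polynomial.X - 1 : Polynomial ℝ).natDegree ≤ 1 := by compute_degree
    calc _ ≤ (n - i - 1) * 1 + i :=
          (Polynomial.natDegree_mul_le).trans <| add_le_add
            ((Polynomial.natDegree_C_mul_le _ _).trans (Polynomial.natDegree_pow_le_of_le _ hX))
            (natDegree_degEulerianPolynomial_le l i)
      _ ≤ n := by have := mem_range.1 hi; omega
  ext m
  rw [Polynomial.coeff_coe, coeff_degEulerianPolynomial, coeff_one_sub_X_pow_mul_dfallSeries]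
  split_ifs with hm
  · rfl
  · rw [← coeff_one_sub_X_pow_mul_dfallSeries, ← hQ, Polynomial.coeff_coe,
      Polynomial.coeff_eq_zero_of_natDegree_lt (by omega)]

theorem degEulerianPolynomial_eq_sum (l : ℝ) {n : ℕ} (hn : n ≠ 0) :
    degEulerianPolynomial l n =
      ∑ i ∈ range n, Polynomial.C ((n.choose i : ℝ) * dfall (-l) 1 (n - i)) *
        (Polynomial.X - 1) ^ (n - i - 1) * degEulerianPolynomial l i := by
  apply Polynomial.coe_injective
  push_cast
  simp only [coe_degEulerianPolynomial]
  exact one_sub_X_pow_mul_dfallSeries l hn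

/-- `A_{0,λ}(x) = 1` and, for `n ≥ 1`,
`A_{n,λ}(x) = ∑_{i=0}^{n-1} C(n,i) A_{i,λ}(x) (1)_{n-i,-λ} (x-1)^{n-i-1}`. -/
theorem stmt4 (l : ℝ) :
    (∀ x : ℝ, degEulerianPoly l 0 x = 1) ∧
    ∀ n : ℕ, 1 ≤ n → ∀ x : ℝ,
      degEulerianPoly l n x =
        ∑ i ∈ Finset.range n,
          (n.choose i : ℝ) * degEulerianPoly l i x * dfall (-l) 1 (n - i) * (x - 1) ^ (n - i - 1) := by
  refine ⟨fun x ↦ by simp [degEulerianPoly, degEulerianNum, dfall_zero], fun n hn x ↦ ?_⟩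
  rw [← eval_degEulerianPolynomial, degEulerianPolynomial_eq_sum l (by omega),
    Polynomial.eval_finsetSum]
  refine sum_congr rfl fun i _ ↦ ?_
  simp only [Polynomial.eval_mul, Polynomial.eval_C, Polynomial.eval_pow, Polynomial.eval_sub,
    Polynomial.eval_X, Polynomial.eval_one, eval_degEulerianPolynomial]
  ring
end

section
/- For all x and integers n ≥ 1, 0 ≤ k ≤ n: (n-k)·binom(x+k+1, n+1) + (k+1)·binom(x+k, n+1) = x·binom(x+k, n), where binom(y, m) = y(y-1)···(y-m+1)/m! is the generalized binomial coefficient. -/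
open Finset PowerSeries

theorem genBinom_succ_mul (y : ℝ) (m : ℕ) :
    ((m : ℝ) + 1) * genBinom y (m + 1) = (y - m) * genBinom y m := by
  unfold genBinom
  rw [prod_range_succ, Nat.factorial_succ]
  push_cast
  field_simp

theorem genBinom_add_one_succ_mul (y : ℝ) (m : ℕ) :
    ((m : ℝ) + 1) * genBinom (y + 1) (m + 1) = (y + 1) * genBinom y m := by
  have hprod : ∏ i ∈ range (m + 1), (y + 1 - i) = (∏ i ∈ range m, (y - i)) * (y + 1) := by
    rw [prod_range_succ']
    push_cast
    simp_rw [add_sub_add_right_eq_sub, sub_zero]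
  unfold genBinom
  rw [hprod, Nat.factorial_succ]
  push_cast
  field_simp

theorem stmt10_general (x : ℝ) (n k : ℕ) :
    ((n : ℝ) - k) * genBinom (x + k + 1) (n + 1) + ((k : ℝ) + 1) * genBinom (x + k) (n + 1)
      = x * genBinom (x + k) n := by
  -- With y = x + k both sides are multiples of binom(y, n), and (n-k)(y+1) + (k+1)(y-n) = (n+1)x.
  refine mul_left_cancel₀ (n.cast_add_one_ne_zero : ((n : ℝ) + 1) ≠ 0) ?_
  linear_combination ((n : ℝ) - k) * genBinom_add_one_succ_mul (x + k) n
    + ((k : ℝ) + 1) * genBinom_succ_mul (x + k) n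

/-- `(n-k) binom(x+k+1, n+1) + (k+1) binom(x+k, n+1) = x binom(x+k, n)`
for `n ≥ 1` and `0 ≤ k ≤ n`. -/
theorem stmt10 (x : ℝ) (n k : ℕ) (hn : 1 ≤ n) (hk : k ≤ n) :
    ((n : ℝ) - k) * genBinom (x + k + 1) (n + 1) + ((k : ℝ) + 1) * genBinom (x + k) (n + 1)
      = x * genBinom (x + k) n :=
  stmt10_general x n k
end

section
/- For integers n ≥ k ≥ 0, the degenerate Stirling number of the second kind satisfies {n brace k}_λ = (1/k!) ∑_{j=0}^{n} A_{-λ}(n,j) binom(j, n-k). -/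
/-!
Evaluating `(x)_{n,λ} = ∑ S_j (x)_j` at natural numbers, where `(i)_j = j! C(i, j)`, shows that the
`k`-th forward difference of `i ↦ (i)_{n,λ}` at `0` is `k! S_k`.

The degenerate Eulerian numbers `A_{-λ}(n, j)` are the coefficients of
`(1 - t)^{n+1} ∑_m (m+1)_{n,-λ} t^m`, a polynomial of degree `≤ n` because `Δ^{n+1}` kills
polynomials of degree `n`. Inverting `(1 - t)^{n+1}` gives Worpitzky's identity
`(m+1)_{n,-λ} = ∑_j A_{-λ}(n, j) C(m + n - j, n)`. Both sides are polynomials in `m`, so it also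
holds at `m = -i - 1`, where it reads `(i)_{n,λ} = ∑_j A_{-λ}(n, j) C(i + j, n)`. The `k`-th forward
difference of the right-hand side at `0` is `∑_j A_{-λ}(n, j) C(j, n - k)`.
-/

open Finset PowerSeries

open fwdDiff

section ForwardDifference

variable {M G : Type*} [AddCommMonoid M] [AddCommGroup G]

lemma AddMonoidHom.fwdDiff_iter_comp {G' : Type*} [AddCommGroup G'] (φ : G →+ G') (h : M)
    (f : M → G) (k : ℕ) : Δ_[h] ^[k] (φ ∘ f) = φ ∘ Δ_[h] ^[k] f := by
  ext y
  simp [fwdDiff_iter_eq_sum_shift]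

lemma fwdDiff_iter_sum_mul {R ι : Type*} [CommRing R] (s : Finset ι) (c : ι → R)
    (g : ι → M → R) (h : M) (k : ℕ) (y : M) :
    Δ_[h] ^[k] (fun x ↦ ∑ j ∈ s, c j * g j x) y = ∑ j ∈ s, c j * Δ_[h] ^[k] (g j) y := by
  have : (fun x ↦ ∑ j ∈ s, c j * g j x) = ∑ j ∈ s, c j • g j := by
    ext x; simp
  simp [this]

variable (R : Type*) [CommRing R]

lemma fwdDiff_iter_natCast_choose_eval_zero (m k : ℕ) :
    Δ_[1] ^[k] (fun x : ℕ ↦ (x.choose m : R)) 0 = if k = m then 1 else 0 := by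
  simpa [Function.comp_def, fwdDiff_iter_choose_zero, apply_ite] using
    congrFun ((Int.castAddHom R).fwdDiff_iter_comp 1 (fun x : ℕ ↦ (x.choose m : ℤ)) k) 0

lemma fwdDiff_iter_natCast_add_choose {k n : ℕ} (hk : k ≤ n) (a : ℕ) :
    Δ_[1] ^[k] (fun x : ℕ ↦ ((x + a).choose n : R)) = fun x ↦ ((x + a).choose (n - k) : R) := by
  obtain ⟨b, rfl⟩ := Nat.exists_eq_add_of_le hk
  ext y
  rw [fwdDiff_iter_comp_add (f := fun x : ℕ ↦ (x.choose (k + b) : R))]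
  simpa [Function.comp_def, fwdDiff_iter_choose] using
    congrFun ((Int.castAddHom R).fwdDiff_iter_comp 1 (fun x : ℕ ↦ (x.choose (k + b) : ℤ)) k) (y + a)

end ForwardDifference

section Worpitzky

variable {R : Type*} [CommRing R]

def worpitzkyCoeff (n : ℕ) (f : ℕ → R) (j : ℕ) : R :=
  ∑ s ∈ range (j + 1), (-1) ^ s * ((n + 1).choose s : R) * f (j - s)

lemma PowerSeries.coeff_one_sub_X_pow_s11 (d s : ℕ) :
    coeff s ((1 - X : R⟦X⟧) ^ d) = (-1) ^ s * (d.choose s : R) := by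
  have : (1 - X : R⟦X⟧) ^ d = rescale (-1) ((1 + Polynomial.X : Polynomial R) ^ d :) := by
    simp [sub_eq_add_neg]
  rw [this, coeff_rescale, Polynomial.coeff_coe, Polynomial.coeff_one_add_X_pow]

lemma coeff_one_sub_X_pow_mul_mk (n : ℕ) (f : ℕ → R) (j : ℕ) :
    coeff j ((1 - X) ^ (n + 1) * PowerSeries.mk f) = worpitzkyCoeff n f j := by
  rw [coeff_mul, Finset.Nat.sum_antidiagonal_eq_sum_range_succ_mk, worpitzkyCoeff]
  simp [coeff_one_sub_X_pow_s11]

lemma eq_sum_worpitzkyCoeff_mul_choose (n : ℕ) (f : ℕ → R) (m : ℕ) :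
    f m = ∑ j ∈ range (m + 1), worpitzkyCoeff n f j * ((m + n - j).choose n : R) := by
  have hinv : PowerSeries.mk f = (PowerSeries.mk fun p ↦ ((n + p).choose n : R)) *
      ((1 - X) ^ (n + 1) * PowerSeries.mk f) := by
    rw [← mul_assoc, mk_add_choose_mul_one_sub_pow_eq_one, one_mul]
  have := congrArg (coeff m) hinv
  rw [coeff_mk, coeff_mul, Finset.Nat.sum_antidiagonal_eq_sum_range_succ_mk] at this
  rw [this, ← Finset.sum_range_reflect]
  refine Finset.sum_congr rfl fun j hj ↦ ?_
  have hj : j ≤ m := Nat.lt_succ_iff.1 (mem_range.1 hj)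
  dsimp only
  rw [show m.succ - 1 - j = m - j by omega, show m - (m - j) = j by omega, coeff_mk,
    coeff_one_sub_X_pow_mul_mk, mul_comm, show n + (m - j) = m + n - j by omega]

lemma worpitzkyCoeff_eq_zero {n : ℕ} {f : ℕ → R} (hf : Δ_[1] ^[n + 1] f = 0) {j : ℕ}
    (hj : n < j) : worpitzkyCoeff n f j = 0 := by
  have h := congrFun hf (j - (n + 1))
  rw [fwdDiff_iter_eq_sum_shift, Pi.zero_apply] at h
  have hsupp : worpitzkyCoeff n f j =
      ∑ s ∈ range (n + 2), (-1) ^ s * ((n + 1).choose s : R) * f (j - s) := by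
    refine (Finset.sum_subset (by intro x hx; simp at hx ⊢; omega) fun s _ hs ↦ ?_).symm
    rw [Nat.choose_eq_zero_of_lt (by simp at hs; omega)]
    simp
  rw [hsupp, ← h, ← Finset.sum_range_reflect]
  refine Finset.sum_congr rfl fun k hk ↦ ?_
  have hk : k ≤ n + 1 := Nat.lt_succ_iff.1 (mem_range.1 hk)
  rw [show n + 2 - 1 - k = n + 1 - k by omega, Nat.choose_symm hk,
    show j - (n + 1 - k) = j - (n + 1) + k • 1 by simp; omega, zsmul_eq_mul]
  push_cast
  ring

theorem eq_sum_worpitzkyCoeff_mul_choose_of_fwdDiff_iter_eq_zero {n : ℕ} {f : ℕ → R}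
    (hf : Δ_[1] ^[n + 1] f = 0) (m : ℕ) :
    f m = ∑ j ∈ range (n + 1), worpitzkyCoeff n f j * ((m + n - j).choose n : R) := by
  have hsub : ∀ {a}, a ≤ m + n → range (a + 1) ⊆ range (m + n + 1) := fun h ↦
    range_subset_range.2 (by omega)
  rw [eq_sum_worpitzkyCoeff_mul_choose n f m]
  calc _ = ∑ j ∈ range (m + n + 1), worpitzkyCoeff n f j * ((m + n - j).choose n : R) := by
        refine Finset.sum_subset (hsub (by omega)) fun j hj hjm ↦ ?_
        simp only [mem_range] at hj hjm
        rw [Nat.choose_eq_zero_of_lt (by omega), Nat.cast_zero, mul_zero]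
    _ = _ := by
        refine (Finset.sum_subset (hsub (by omega)) fun j hj hjn ↦ ?_).symm
        simp only [mem_range] at hj hjn
        rw [worpitzkyCoeff_eq_zero hf (by omega), zero_mul]

end Worpitzky

section Polynomial

open Polynomial

variable {R : Type*} [CommRing R]

lemma descPochhammer_eval_natCast_eq_factorial_mul_choose (n k : ℕ) :
    (descPochhammer R n).eval (k : R) = n.factorial * k.choose n := by
  rw [descPochhammer_eval_eq_descFactorial, Nat.descFactorial_eq_factorial_mul_choose,
    Nat.cast_mul]

lemma descPochhammer_eval_sub_one_sub (n : ℕ) (r : R) :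
    (descPochhammer R n).eval ((n : R) - 1 - r) = (-1) ^ n * (descPochhammer R n).eval r := by
  rw [descPochhammer_eval_eq_ascPochhammer, ← ascPochhammer_eval_neg_eq_descPochhammer]
  ring_nf

lemma Polynomial.fwdDiff_iter_eval_natCast_add_one_eq_zero {P : R[X]} {n : ℕ}
    (hP : P.natDegree ≤ n) : Δ_[1] ^[n + 1] (fun m : ℕ ↦ P.eval ((m : R) + 1)) = 0 := by
  ext m
  have h := congrFun (fwdDiff_iter_eq_zero_of_degree_lt (Nat.lt_succ_of_le hP)) ((m : R) + 1)
  rw [Pi.zero_apply] at h ⊢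
  rw [← h]
  simp [fwdDiff_iter_eq_sum_shift, add_right_comm]

variable [IsDomain R] [CharZero R]

theorem Polynomial.eval_neg_natCast_eq_sum_worpitzkyCoeff_mul_choose (P : R[X]) {n : ℕ}
    (hP : P.natDegree ≤ n) (i : ℕ) :
    P.eval (-(i : R)) = (-1) ^ n * ∑ j ∈ range (n + 1),
      worpitzkyCoeff n (fun m ↦ P.eval ((m : R) + 1)) j * ((i + j).choose n : R) := by
  set a := worpitzkyCoeff n (fun m ↦ P.eval ((m : R) + 1))
  -- `(descPochhammer R n).comp (X + C (n - 1 - j))` is `x ↦ n! C(x + n - 1 - j, n)`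
  have hpoly : C (n.factorial : R) * P =
      ∑ j ∈ range (n + 1), C (a j) * (descPochhammer R n).comp (X + C ((n : R) - 1 - j)) := by
    refine eq_of_infinite_eval_eq _ _ (Set.infinite_of_injective_forall_mem
      (f := fun m : ℕ ↦ (m : R) + 1) (fun a b h ↦ by simpa using h) fun m ↦ ?_)
    simp only [Set.mem_ofPred_eq, eval_mul, eval_C, eval_finsetSum, eval_comp, eval_add, eval_X]
    rw [eq_sum_worpitzkyCoeff_mul_choose_of_fwdDiff_iter_eq_zero
      (fwdDiff_iter_eval_natCast_add_one_eq_zero hP) m, Finset.mul_sum]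
    refine Finset.sum_congr rfl fun j hj ↦ ?_
    have hj : j ≤ n := Nat.lt_succ_iff.1 (mem_range.1 hj)
    rw [show (m : R) + 1 + ((n : R) - 1 - j) = ((m + n - j : ℕ) : R) by
      push_cast [Nat.cast_sub (show j ≤ m + n by omega)]; ring,
      descPochhammer_eval_natCast_eq_factorial_mul_choose]
    ring
  have hneg := congrArg (eval (-(i : R))) hpoly
  simp only [eval_mul, eval_C, eval_finsetSum, eval_comp, eval_add, eval_X] at hneg
  refine mul_left_cancel₀ (Nat.cast_ne_zero.2 n.factorial_ne_zero) (hneg.trans ?_)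
  rw [Finset.mul_sum, Finset.mul_sum]
  refine Finset.sum_congr rfl fun j _ ↦ ?_
  rw [show -(i : R) + ((n : R) - 1 - j) = n - 1 - ((i + j : ℕ) : R) by push_cast; ring,
    descPochhammer_eval_sub_one_sub, descPochhammer_eval_natCast_eq_factorial_mul_choose]
  ring

end Polynomial

lemma dfall_eq_eval (l x : ℝ) (n : ℕ) :
    dfall l x n = (∏ t ∈ range n, (Polynomial.X - Polynomial.C ((t : ℝ) * l))).eval x := by
  simp [dfall, Polynomial.eval_prod]

lemma dfall_neg_neg (l x : ℝ) (n : ℕ) : dfall (-l) (-x) n = (-1) ^ n * dfall l x n := by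
  calc dfall (-l) (-x) n = ∏ t ∈ range n, -(x - t * l) :=
        Finset.prod_congr rfl fun t _ ↦ by ring
    _ = _ := by rw [prod_neg, card_range, dfall]

lemma dfall_one_natCast (i j : ℕ) : dfall 1 (i : ℝ) j = j.factorial * i.choose j := by
  simp [← descPochhammer_eval_natCast_eq_factorial_mul_choose, descPochhammer_eval_eq_prod_range,
    dfall]

lemma degEulerianNum_eq_worpitzkyCoeff (l : ℝ) (n j : ℕ) :
    degEulerianNum l n j = worpitzkyCoeff n (fun m ↦ dfall l ((m : ℝ) + 1) n) j := by
  refine Finset.sum_congr rfl fun s hs ↦ ?_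
  dsimp only
  rw [Nat.cast_sub (Nat.lt_succ_iff.1 (mem_range.1 hs))]
  ring

theorem dfall_natCast_eq_sum_degEulerianNum_mul_choose (l : ℝ) (n i : ℕ) :
    dfall l i n = ∑ j ∈ range (n + 1), degEulerianNum (-l) n j * ((i + j).choose n : ℝ) := by
  have h := Polynomial.eval_neg_natCast_eq_sum_worpitzkyCoeff_mul_choose
    (∏ t ∈ range n, (Polynomial.X - Polynomial.C ((t : ℝ) * -l)))
    (by rw [Polynomial.natDegree_finsetProd_X_sub_C_eq_card, card_range]) i
  simp only [← dfall_eq_eval, dfall_neg_neg, ← degEulerianNum_eq_worpitzkyCoeff] at h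
  exact mul_left_cancel₀ (pow_ne_zero n (neg_ne_zero.2 one_ne_zero)) h

/-- if `S k = {n brace k}_λ` are the degenerate Stirling numbers of the
second kind, i.e. `(x)_{n,λ} = ∑_{k=0}^n S k (x)_k` for all `x`, then for `k ≤ n`:
`S k = (1/k!) ∑_{j=0}^n A_{-λ}(n,j) binom(j, n-k)`. -/
theorem stmt11 (l : ℝ) (n k : ℕ) (hk : k ≤ n) (S : ℕ → ℝ)
    (hS : ∀ x : ℝ, dfall l x n = ∑ j ∈ Finset.range (n + 1), S j * dfall 1 x j) :
    S k = (1 / (k.factorial : ℝ)) *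
      ∑ j ∈ Finset.range (n + 1), degEulerianNum (-l) n j * (j.choose (n - k) : ℝ) := by
  have hnewton : ∀ i : ℕ,
      dfall l i n = ∑ j ∈ range (n + 1), S j * j.factorial * (i.choose j : ℝ) :=
    fun i ↦ by simp_rw [hS, dfall_one_natCast, mul_assoc]
  have hkey : S k * k.factorial =
      ∑ j ∈ range (n + 1), degEulerianNum (-l) n j * (j.choose (n - k) : ℝ) := calc
    S k * k.factorial = Δ_[1] ^[k] (fun i : ℕ ↦ dfall l i n) 0 := by
      simp_rw [hnewton, fwdDiff_iter_sum_mul, fwdDiff_iter_natCast_choose_eval_zero]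
      simp [Nat.lt_succ_of_le hk]
    _ = _ := by
      simp_rw [dfall_natCast_eq_sum_degEulerianNum_mul_choose, fwdDiff_iter_sum_mul,
        fwdDiff_iter_natCast_add_choose ℝ hk, zero_add]
  rw [← hkey]
  field_simp
end

section
/- For positive integers n and k with 1 ≤ k ≤ n: A_λ(n, k-1) = (-1)^k ∑_{j=0}^{k} (-1)^j binom(n-j, n-k) j! {n brace j}_λ. -/
open Finset PowerSeries

/-! Expanding `j! {n brace j}_λ` by its explicit formula and exchanging the two sums, the
coefficient of `(-1)^i (i)_{n,λ}` on the right becomes `∑_j binom(n-j, n-k) binom(j, i)`, which by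
the Chu–Vandermonde identity `∑_j binom(j, a) binom(m-j, b) = binom(m+1, a+b+1)` equals
`binom(n+1, k-i)`. Reflecting the summation index of `A_λ(n, k-1)` gives the same sum, its extra
term `i = 0` vanishing because `(0)_{n,λ} = 0`. -/

theorem Nat.sum_range_choose_mul_choose_sub (m a b : ℕ) :
    ∑ j ∈ range (m + 1), j.choose a * (m - j).choose b = (m + 1).choose (a + b + 1) := by
  induction m generalizing b with
  | zero => cases a <;> cases b <;> simp [Nat.choose_eq_zero_of_lt]
  | succ m ih =>
    rw [sum_range_succ, Nat.sub_self]
    cases b with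
    | zero =>
      have hockey := ih 0
      simp only [Nat.choose_zero_right, mul_one, add_zero] at hockey ⊢
      rw [hockey, Nat.choose_succ_succ' (m + 1), add_comm]
    | succ b =>
      have pascal : ∀ j ∈ range (m + 1), j.choose a * (m + 1 - j).choose (b + 1)
          = j.choose a * (m - j).choose b + j.choose a * (m - j).choose (b + 1) := by
        intro j hj
        rw [Nat.sub_add_comm (mem_range_succ_iff.mp hj), Nat.choose_succ_succ, Nat.mul_add]
      rw [sum_congr rfl pascal, sum_add_distrib, ih, ih, Nat.choose_zero_succ, mul_zero, add_zero,
        ← add_assoc a b 1, Nat.choose_succ_succ (m + 1)]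

theorem Nat.sum_range_choose_sub_mul_choose {i k n : ℕ} (hik : i ≤ k) (hkn : k ≤ n) :
    ∑ j ∈ range (k + 1), (n - j).choose (n - k) * j.choose i = (n + 1).choose (k - i) := by
  have extend : ∑ j ∈ range (k + 1), (n - j).choose (n - k) * j.choose i
      = ∑ j ∈ range (n + 1), j.choose i * (n - j).choose (n - k) := by
    simp_rw [mul_comm ((n - _).choose _)]
    refine sum_subset (range_subset_range.mpr (by omega)) fun j hjn hjk => ?_
    rw [mem_range] at hjn hjk
    rw [Nat.choose_eq_zero_of_lt (by omega : n - j < n - k), mul_zero]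
  rw [extend, Nat.sum_range_choose_mul_choose_sub, ← Nat.choose_symm (by omega : k - i ≤ n + 1)]
  congr 1
  omega

theorem dfall_zero_left (l : ℝ) {n : ℕ} (hn : 0 < n) : dfall l 0 n = 0 :=
  prod_eq_zero (mem_range.mpr hn) (by simp)

theorem neg_one_pow_mul_factorial_mul_degStirling2 (l : ℝ) (n j : ℕ) :
    (-1) ^ j * j.factorial * degStirling2 l n j
      = ∑ i ∈ range (j + 1), (-1) ^ i * (j.choose i : ℝ) * dfall l i n := by
  have hcoef : (-1 : ℝ) ^ j * j.factorial * ((-1) ^ j / j.factorial) = 1 := by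
    field_simp
    rw [← pow_mul, mul_comm, pow_mul, neg_one_sq, one_pow]
  rw [degStirling2, ← mul_assoc, hcoef, one_mul]

theorem degEulerianNum_sub_one {l : ℝ} {n k : ℕ} (hn : 0 < n) (hk : 1 ≤ k) :
    degEulerianNum l n (k - 1)
      = (-1) ^ k * ∑ i ∈ range (k + 1), (-1) ^ i * ((n + 1).choose (k - i) : ℝ) * dfall l i n := by
  obtain ⟨m, rfl⟩ := Nat.exists_eq_add_of_le' hk
  rw [Nat.add_sub_cancel, degEulerianNum, ← sum_range_reflect, Nat.add_sub_cancel,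
    sum_range_succ' _ (m + 1), Nat.cast_zero, dfall_zero_left l hn, mul_zero, add_zero, mul_sum]
  refine sum_congr rfl fun j hj => ?_
  have hjm : j ≤ m := mem_range_succ_iff.mp hj
  have hsign : (-1 : ℝ) ^ (m + 1) * (-1) ^ (j + 1) = (-1) ^ (m - j) := by
    rw [← pow_add, show m + 1 + (j + 1) = (m - j) + 2 * (j + 1) by omega, pow_add, pow_mul,
      neg_one_sq, one_pow, mul_one]
  have harg : (m : ℝ) - (m - j : ℕ) + 1 = (j + 1 : ℕ) := by
    push_cast [Nat.cast_sub hjm]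
    ring
  rw [harg, show m + 1 - (j + 1) = m - j by omega, ← hsign]
  ring

/-- for `1 ≤ k ≤ n`,
`A_λ(n,k-1) = (-1)^k ∑_{j=0}^k (-1)^j binom(n-j, n-k) j! {n brace j}_λ`. -/
theorem stmt15 (l : ℝ) (n k : ℕ) (hk1 : 1 ≤ k) (hkn : k ≤ n) :
    degEulerianNum l n (k - 1) =
      (-1)^k * ∑ j ∈ Finset.range (k + 1),
        (-1)^j * ((n - j).choose (n - k) : ℝ) * (j.factorial : ℝ) * degStirling2 l n j := by
  rw [degEulerianNum_sub_one (by omega) hk1]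
  congr 1
  calc ∑ i ∈ range (k + 1), (-1) ^ i * ((n + 1).choose (k - i) : ℝ) * dfall l i n
      = ∑ i ∈ range (k + 1), ∑ j ∈ range (k + 1),
          ((n - j).choose (n - k) : ℝ) * ((-1) ^ i * (j.choose i : ℝ) * dfall l i n) := by
        refine sum_congr rfl fun i hi => ?_
        rw [← Nat.sum_range_choose_sub_mul_choose (mem_range_succ_iff.mp hi) hkn, Nat.cast_sum,
          mul_sum, sum_mul]
        refine sum_congr rfl fun j _ => ?_
        push_cast
        ring
    _ = ∑ j ∈ range (k + 1), ((n - j).choose (n - k) : ℝ)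
          * ∑ i ∈ range (j + 1), (-1) ^ i * (j.choose i : ℝ) * dfall l i n := by
        rw [sum_comm]
        refine sum_congr rfl fun j hj => ?_
        rw [← mul_sum]
        congr 1
        refine (sum_subset (range_subset_range.mpr (by simpa using hj)) fun i _ hij => ?_).symm
        rw [Nat.choose_eq_zero_of_lt (by simpa using hij)]
        simp
    _ = _ := by
        refine sum_congr rfl fun j _ => ?_
        rw [← neg_one_pow_mul_factorial_mul_degStirling2]
        ring
end
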